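/- arXiv:2206.11241 — 2 statements merged into one kernel-verified Lean document; each statement's English description precedes it below -/
import Mathlib

section
/- Let (X_j)_{j=0}^{L} be a sequence of Bochner-integrable random vectors in ℝ^p with X_0 = 0 that is a very-weak martingale, i.e. E[ X_j | σ(X_{j−1}) ] = X_{j−1} almost surely for every j ∈ {1,…,L}. Suppose ‖X_j − X_{j−1}‖₂ ≤ 1 almost surely for every j ∈ {1,…,L}. Then for every j ∈ {1,…,L} and every a > 0, P( ‖X_j‖₂ ≥ a ) < 2·exp( 1 − (a−1)²/(2j) ). -/
/-!
Hayes' argument. For a step `‖y‖ ≤ 1`,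
`cosh (t ‖x + y‖) ≤ cosh t * cosh (t ‖x‖) + ⟪G x, y⟫` with an explicit vector field `G`:
write `‖x + y‖² ≤ ‖x‖² + 2⟪x, y⟫ + 1` as a convex combination of `(‖x‖ - 1)²` and `(‖x‖ + 1)²`
and use that `v ↦ cosh (t √v)` is convex (its power series has nonnegative coefficients).
As `G (X (k - 1))` is bounded and `σ(X (k - 1))`-measurable, the very-weak martingale property
makes `E ⟪G (X (k - 1)), X k - X (k - 1)⟫` vanish, so `E cosh (t ‖X j‖) ≤ cosh t ^ j`.
Markov's inequality with `t = a / j` and `cosh t ≤ exp (t² / 2)` then give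
`P (‖X j‖ ≥ a) ≤ 2 exp (-a² / 2j)`, which is below the claimed bound.
-/
open MeasureTheory Real

open scoped RealInnerProductSpace

theorem cosh_mul_le_cosh_mul (t : ℝ) {a b : ℝ} (ha : 0 ≤ a) (hab : a ≤ b) :
    cosh (t * a) ≤ cosh (t * b) := by
  rw [cosh_le_cosh, abs_mul, abs_mul]
  gcongr

theorem cosh_mul_abs (t x : ℝ) : cosh (t * |x|) = cosh (t * x) := by
  rw [← cosh_abs, abs_mul, abs_abs, ← abs_mul, cosh_abs]

theorem hasSum_cosh_mul_sqrt (t : ℝ) {v : ℝ} (hv : 0 ≤ v) :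
    HasSum (fun n : ℕ => (t ^ 2 * v) ^ n / (2 * n).factorial) (cosh (t * √v)) := by
  convert hasSum_cosh (t * √v) using 2 with n
  rw [pow_mul, mul_pow t, sq_sqrt hv, mul_pow]

theorem convexOn_cosh_mul_sqrt (t : ℝ) : ConvexOn ℝ (Set.Ici 0) fun v => cosh (t * √v) := by
  refine ⟨convex_Ici 0, fun x hx y hy a b ha hb hab => ?_⟩
  refine hasSum_le (fun n => ?_) (hasSum_cosh_mul_sqrt t (convex_Ici 0 hx hy ha hb hab))
    (((hasSum_cosh_mul_sqrt t hx).mul_left a).add ((hasSum_cosh_mul_sqrt t hy).mul_left b))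
  have hpow := (convexOn_pow n).2 (Set.mem_Ici.2 (mul_nonneg (sq_nonneg t) hx))
    (Set.mem_Ici.2 (mul_nonneg (sq_nonneg t) hy)) ha hb hab
  simp only [smul_eq_mul] at hpow ⊢
  rw [mul_div_assoc', mul_div_assoc', ← add_div]
  gcongr
  calc (t ^ 2 * (a * x + b * y)) ^ n = (a * (t ^ 2 * x) + b * (t ^ 2 * y)) ^ n := by ring
    _ ≤ _ := hpow

/-- The weights `(u ∓ s) / 2u` on `(u ∓ 1)²` average to `u² + 2s + 1`. -/
theorem cosh_mul_sqrt_le (t : ℝ) {u s : ℝ} (hu : 0 < u) (hs : |s| ≤ u) :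
    cosh (t * √(u ^ 2 + 2 * s + 1)) ≤ cosh t * cosh (t * u) + sinh t * sinh (t * u) * s / u := by
  obtain ⟨hs₁, hs₂⟩ := abs_le.1 hs
  have hconv := (convexOn_cosh_mul_sqrt t).2 (Set.mem_Ici.2 (sq_nonneg (u - 1)))
    (Set.mem_Ici.2 (sq_nonneg (u + 1)))
    (div_nonneg (by linarith) (by positivity) : 0 ≤ (u - s) / (2 * u))
    (div_nonneg (by linarith) (by positivity) : 0 ≤ (u + s) / (2 * u)) (by field_simp; ring)
  have hmean : (u - s) / (2 * u) * (u - 1) ^ 2 + (u + s) / (2 * u) * (u + 1) ^ 2 =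
      u ^ 2 + 2 * s + 1 := by
    field_simp; ring
  have hends : (u - s) / (2 * u) * cosh (t * (u - 1)) + (u + s) / (2 * u) * cosh (t * (u + 1)) =
      cosh t * cosh (t * u) + sinh t * sinh (t * u) * s / u := by
    rw [show t * (u - 1) = t * u - t by ring, show t * (u + 1) = t * u + t by ring,
      cosh_sub, cosh_add]
    field_simp
    ring
  simpa only [smul_eq_mul, sqrt_sq_eq_abs, cosh_mul_abs, hmean, hends] using hconv

section InnerProductSpace

variable {E : Type*} [NormedAddCommGroup E] [InnerProductSpace ℝ E]

/-- `sinh t / t` times the gradient of `x ↦ cosh (t ‖x‖)`; at `x = 0` the junk value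
`‖x‖⁻¹ = 0` gives the correct value `0`. -/
noncomputable def hayesField (t : ℝ) (x : E) : E := (sinh t * sinh (t * ‖x‖) / ‖x‖) • x

theorem norm_hayesField (t : ℝ) (x : E) : ‖hayesField t x‖ = |sinh t * sinh (t * ‖x‖)| := by
  rcases eq_or_ne x 0 with rfl | hx
  · simp [hayesField]
  · rw [hayesField, norm_smul, norm_div, norm_norm, div_mul_cancel₀ _ (norm_ne_zero_iff.2 hx),
      Real.norm_eq_abs]

theorem norm_hayesField_le (t : ℝ) {x : E} {C : ℝ} (hx : ‖x‖ ≤ C) :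
    ‖hayesField t x‖ ≤ |sinh t| * sinh (|t| * C) := by
  rw [norm_hayesField, abs_mul, abs_sinh (t * ‖x‖), abs_mul, abs_norm]
  gcongr
  exact sinh_le_sinh.2 (by gcongr)

theorem inner_hayesField (t : ℝ) (x y : E) :
    ⟪hayesField t x, y⟫ = sinh t * sinh (t * ‖x‖) * ⟪x, y⟫ / ‖x‖ := by
  rw [hayesField, real_inner_smul_left]
  ring

theorem measurable_hayesField [MeasurableSpace E] [BorelSpace E] [SecondCountableTopology E]
    (t : ℝ) : Measurable (hayesField (E := E) t) := by
  have hcoeff : Measurable fun x : E => sinh t * sinh (t * ‖x‖) / ‖x‖ := by fun_prop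
  exact hcoeff.smul measurable_id

theorem cosh_mul_norm_add_le (t : ℝ) (x : E) {y : E} (hy : ‖y‖ ≤ 1) :
    cosh (t * ‖x + y‖) ≤ cosh t * cosh (t * ‖x‖) + ⟪hayesField t x, y⟫ := by
  rcases eq_or_ne x 0 with rfl | hx
  · simpa [hayesField] using cosh_mul_le_cosh_mul t (norm_nonneg y) hy
  have hu : 0 < ‖x‖ := norm_pos_iff.2 hx
  have hs : |⟪x, y⟫| ≤ ‖x‖ :=
    (abs_real_inner_le_norm x y).trans (mul_le_of_le_one_right hu.le hy)
  have hsq : ‖x + y‖ ^ 2 ≤ ‖x‖ ^ 2 + 2 * ⟪x, y⟫ + 1 := by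
    rw [norm_add_sq_real]
    gcongr
    exact pow_le_one₀ (norm_nonneg y) hy
  calc cosh (t * ‖x + y‖) ≤ cosh (t * √(‖x‖ ^ 2 + 2 * ⟪x, y⟫ + 1)) :=
        cosh_mul_le_cosh_mul t (norm_nonneg _) (le_sqrt_of_sq_le hsq)
    _ ≤ _ := cosh_mul_sqrt_le t hu hs
    _ = _ := by rw [inner_hayesField]

end InnerProductSpace

section Probability

variable {Ω E : Type*} {mΩ : MeasurableSpace Ω} {μ : Measure Ω} [NormedAddCommGroup E]

theorem ae_norm_le_of_norm_sub_le_one {X : ℕ → Ω → E} {L : ℕ}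
    (hX0 : X 0 = 0) (hdiff : ∀ k < L, ∀ᵐ ω ∂μ, ‖X (k + 1) ω - X k ω‖ ≤ 1) :
    ∀ k ≤ L, ∀ᵐ ω ∂μ, ‖X k ω‖ ≤ k := by
  intro k
  induction k with
  | zero => simp [hX0]
  | succ k ih =>
    intro hk
    filter_upwards [ih (by omega), hdiff k (by omega)] with ω hle hstep
    calc ‖X (k + 1) ω‖ ≤ ‖X k ω‖ + ‖X (k + 1) ω - X k ω‖ := norm_le_insert' _ _
      _ ≤ k + 1 := add_le_add hle hstep
      _ = (k + 1 : ℕ) := by push_cast; rfl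

theorem integrable_cosh_mul_norm [IsFiniteMeasure μ] (t : ℝ) {Y : Ω → E} {C : ℝ}
    (hY : AEStronglyMeasurable Y μ) (hYC : ∀ᵐ ω ∂μ, ‖Y ω‖ ≤ C) :
    Integrable (fun ω => cosh (t * ‖Y ω‖)) μ := by
  have hcont : Continuous fun y : E => cosh (t * ‖y‖) := by fun_prop
  refine .of_bound (hcont.comp_aestronglyMeasurable hY) (cosh (t * C)) ?_
  filter_upwards [hYC] with ω hω
  rw [norm_of_nonneg (cosh_pos _).le]
  exact cosh_mul_le_cosh_mul t (norm_nonneg _) hω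

theorem measureReal_norm_ge_le_integral_div [IsFiniteMeasure μ] {Y : Ω → E} (t : ℝ) {a : ℝ}
    (ha : 0 ≤ a) (hY : Integrable (fun ω => cosh (t * ‖Y ω‖)) μ) :
    μ.real {ω | a ≤ ‖Y ω‖} ≤ (∫ ω, cosh (t * ‖Y ω‖) ∂μ) / cosh (t * a) := by
  rw [le_div_iff₀ (cosh_pos _), mul_comm]
  calc cosh (t * a) * μ.real {ω | a ≤ ‖Y ω‖}
      ≤ cosh (t * a) * μ.real {ω | cosh (t * a) ≤ cosh (t * ‖Y ω‖)} := by
        refine mul_le_mul_of_nonneg_left (measureReal_mono fun ω hω => ?_) (cosh_pos _).le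
        exact cosh_mul_le_cosh_mul t ha hω
    _ ≤ ∫ ω, cosh (t * ‖Y ω‖) ∂μ :=
        mul_meas_ge_le_integral_of_nonneg (ae_of_all _ fun ω => (cosh_pos _).le) hY _

variable [InnerProductSpace ℝ E] [CompleteSpace E]

theorem integral_inner_eq_zero_of_condExp_ae_eq_zero {m : MeasurableSpace Ω} (hm : m ≤ mΩ)
    [SigmaFinite (μ.trim hm)] {Z D : Ω → E} (hZ : AEStronglyMeasurable[m] Z μ)
    (hZD : Integrable (fun ω => ⟪Z ω, D ω⟫) μ) (hD : Integrable D μ) (hD0 : μ[D|m] =ᵐ[μ] 0) :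
    ∫ ω, ⟪Z ω, D ω⟫ ∂μ = 0 := by
  have hpull : μ[fun ω => ⟪Z ω, D ω⟫|m] =ᵐ[μ] fun ω => ⟪Z ω, μ[D|m] ω⟫ :=
    condExp_bilin_of_aestronglyMeasurable_left (innerSL ℝ) hZ hZD hD
  rw [← integral_condExp hm, integral_congr_ae hpull]
  refine integral_eq_zero_of_ae ?_
  filter_upwards [hD0] with ω hω
  simp [hω]

variable [MeasurableSpace E] [BorelSpace E] [SecondCountableTopology E]

theorem integral_cosh_mul_norm_le_of_condExp_ae_eq [IsFiniteMeasure μ] {W V : Ω → E} (t : ℝ)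
    {C : ℝ} (hW : Measurable W) (hV : Integrable V μ)
    (hcond : μ[V|MeasurableSpace.comap W inferInstance] =ᵐ[μ] W)
    (hWC : ∀ᵐ ω ∂μ, ‖W ω‖ ≤ C) (hVW : ∀ᵐ ω ∂μ, ‖V ω - W ω‖ ≤ 1) :
    ∫ ω, cosh (t * ‖V ω‖) ∂μ ≤ cosh t * ∫ ω, cosh (t * ‖W ω‖) ∂μ := by
  set m := MeasurableSpace.comap W inferInstance
  have hm : m ≤ mΩ := hW.comap_le
  have hWint : Integrable W μ := .of_bound hW.aestronglyMeasurable C hWC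
  have hWm : StronglyMeasurable[m] W := (comap_measurable W).stronglyMeasurable
  have hZ : StronglyMeasurable[m] fun ω => hayesField t (W ω) :=
    ((measurable_hayesField t).comp (comap_measurable W)).stronglyMeasurable
  have hZD : Integrable (fun ω => ⟪hayesField t (W ω), V ω - W ω⟫) μ := by
    refine .of_bound ((hZ.mono hm).aestronglyMeasurable.inner
      (hV.sub hWint).aestronglyMeasurable) (|sinh t| * sinh (|t| * C) * 1) ?_
    filter_upwards [hWC, hVW] with ω hWω hVWω
    have hZω := norm_hayesField_le t hWω
    exact (norm_inner_le_norm _ _).trans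
      (mul_le_mul hZω hVWω (norm_nonneg _) ((norm_nonneg _).trans hZω))
  have hD0 : μ[V - W|m] =ᵐ[μ] 0 := by
    filter_upwards [condExp_sub hV hWint m, hcond] with ω hsub hVω
    rw [hsub, Pi.sub_apply, hVω, condExp_of_stronglyMeasurable hm hWm hWint, sub_self,
      Pi.zero_apply]
  have horth : ∫ ω, ⟪hayesField t (W ω), V ω - W ω⟫ ∂μ = 0 :=
    integral_inner_eq_zero_of_condExp_ae_eq_zero hm hZ.aestronglyMeasurable hZD (hV.sub hWint) hD0
  have hcoshW := integrable_cosh_mul_norm t hW.aestronglyMeasurable hWC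
  have hstep : ∀ᵐ ω ∂μ, cosh (t * ‖V ω‖) ≤
      cosh t * cosh (t * ‖W ω‖) + ⟪hayesField t (W ω), V ω - W ω⟫ := by
    filter_upwards [hVW] with ω hω
    simpa using cosh_mul_norm_add_le t (W ω) hω
  calc ∫ ω, cosh (t * ‖V ω‖) ∂μ
      ≤ ∫ ω, cosh t * cosh (t * ‖W ω‖) + ⟪hayesField t (W ω), V ω - W ω⟫ ∂μ := by
        have hVC : ∀ᵐ ω ∂μ, ‖V ω‖ ≤ C + 1 := by
          filter_upwards [hWC, hVW] with ω hWω hVWω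
          linarith [norm_le_insert' (V ω) (W ω)]
        exact integral_mono_ae (integrable_cosh_mul_norm t hV.aestronglyMeasurable hVC)
          ((hcoshW.const_mul _).add hZD) hstep
    _ = cosh t * ∫ ω, cosh (t * ‖W ω‖) ∂μ := by
        rw [integral_add (hcoshW.const_mul _) hZD, horth, add_zero, integral_const_mul]

theorem integral_cosh_mul_norm_le_cosh_pow [IsProbabilityMeasure μ] {X : ℕ → Ω → E} {L : ℕ}
    (t : ℝ) (hmeas : ∀ k, Measurable (X k)) (hint : ∀ k, Integrable (X k) μ) (hX0 : X 0 = 0)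
    (hmart : ∀ k < L, μ[X (k + 1)|MeasurableSpace.comap (X k) inferInstance] =ᵐ[μ] X k)
    (hdiff : ∀ k < L, ∀ᵐ ω ∂μ, ‖X (k + 1) ω - X k ω‖ ≤ 1) :
    ∀ k ≤ L, ∫ ω, cosh (t * ‖X k ω‖) ∂μ ≤ cosh t ^ k := by
  intro k
  induction k with
  | zero => simp [hX0]
  | succ k ih =>
    intro hk
    calc ∫ ω, cosh (t * ‖X (k + 1) ω‖) ∂μ ≤ cosh t * ∫ ω, cosh (t * ‖X k ω‖) ∂μ :=
          integral_cosh_mul_norm_le_of_condExp_ae_eq t (hmeas k) (hint (k + 1)) (hmart k hk)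
            (ae_norm_le_of_norm_sub_le_one hX0 hdiff k (Nat.le_of_succ_le hk)) (hdiff k hk)
      _ ≤ cosh t ^ (k + 1) := by
          rw [pow_succ']
          exact mul_le_mul_of_nonneg_left (ih (Nat.le_of_succ_le hk)) (cosh_pos t).le

end Probability

theorem cosh_pow_div_cosh_le (a : ℝ) {j : ℕ} (hj : 0 < j) :
    cosh (a / j) ^ j / cosh (a / j * a) ≤ 2 * exp (-a ^ 2 / (2 * j)) := by
  have hnum : cosh (a / j) ^ j ≤ exp (j * ((a / j) ^ 2 / 2)) := by
    rw [exp_nat_mul]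
    exact pow_le_pow_left₀ (cosh_pos _).le (cosh_le_exp_half_sq _) j
  have hden : exp (a / j * a) / 2 ≤ cosh (a / j * a) := by
    rw [cosh_eq]
    linarith [exp_pos (-(a / j * a))]
  calc cosh (a / j) ^ j / cosh (a / j * a)
      ≤ exp (j * ((a / j) ^ 2 / 2)) / (exp (a / j * a) / 2) :=
        div_le_div₀ (exp_pos _).le hnum (by positivity) hden
    _ = 2 * exp (j * ((a / j) ^ 2 / 2) - a / j * a) := by rw [exp_sub]; ring
    _ = 2 * exp (-a ^ 2 / (2 * j)) := by
        congr 2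
        field_simp
        ring

section Martingale

variable {Ω E : Type*} {mΩ : MeasurableSpace Ω} {μ : Measure Ω} [IsProbabilityMeasure μ]
  [NormedAddCommGroup E] [InnerProductSpace ℝ E] [CompleteSpace E]
  [MeasurableSpace E] [BorelSpace E] [SecondCountableTopology E]

theorem measureReal_norm_ge_le_two_mul_exp {X : ℕ → Ω → E} {L j : ℕ}
    (hmeas : ∀ k, Measurable (X k)) (hint : ∀ k, Integrable (X k) μ) (hX0 : X 0 = 0)
    (hmart : ∀ k < L, μ[X (k + 1)|MeasurableSpace.comap (X k) inferInstance] =ᵐ[μ] X k)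
    (hdiff : ∀ k < L, ∀ᵐ ω ∂μ, ‖X (k + 1) ω - X k ω‖ ≤ 1) (hj : 0 < j) (hjL : j ≤ L)
    {a : ℝ} (ha : 0 ≤ a) :
    μ.real {ω | a ≤ ‖X j ω‖} ≤ 2 * exp (-a ^ 2 / (2 * j)) :=
  calc μ.real {ω | a ≤ ‖X j ω‖}
      ≤ (∫ ω, cosh (a / j * ‖X j ω‖) ∂μ) / cosh (a / j * a) :=
        measureReal_norm_ge_le_integral_div _ ha <| integrable_cosh_mul_norm _
          (hmeas j).aestronglyMeasurable (ae_norm_le_of_norm_sub_le_one hX0 hdiff j hjL)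
    _ ≤ cosh (a / j) ^ j / cosh (a / j * a) := by
        gcongr
        exact integral_cosh_mul_norm_le_cosh_pow _ hmeas hint hX0 hmart hdiff j hjL
    _ ≤ 2 * exp (-a ^ 2 / (2 * j)) := cosh_pow_div_cosh_le a hj

end Martingale

/-- Azuma–Hoeffding-type tail bound of Hayes for very-weak
martingales: let `(X_j)_{j=0}^{L}` be Bochner-integrable random vectors in `ℝ^p`
with `X_0 = 0` forming a very-weak martingale, i.e.
`E[X_j | σ(X_{j−1})] = X_{j−1}` a.s. for every `j ∈ {1,…,L}`, and suppose
`‖X_j − X_{j−1}‖₂ ≤ 1` almost surely for every `j ∈ {1,…,L}`. Then for every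
`j ∈ {1,…,L}` and every `a > 0`, `P(‖X_j‖₂ ≥ a) < 2 exp(1 − (a−1)²/(2j))`. -/
theorem veryWeakMartingale_tail_bound
    {Ω : Type*} {mΩ : MeasurableSpace Ω} (μ : Measure Ω) [IsProbabilityMeasure μ]
    {p L : ℕ} (X : ℕ → Ω → EuclideanSpace ℝ (Fin p))
    (hmeas : ∀ j, Measurable (X j))
    (hint : ∀ j, Integrable (X j) μ)
    (hX0 : X 0 = 0)
    (hmart : ∀ j, 1 ≤ j → j ≤ L →
      μ[X j|MeasurableSpace.comap (X (j - 1)) inferInstance] =ᵐ[μ] X (j - 1))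
    (hdiff : ∀ j, 1 ≤ j → j ≤ L → ∀ᵐ ω ∂μ, ‖X j ω - X (j - 1) ω‖ ≤ 1) :
    ∀ j, 1 ≤ j → j ≤ L → ∀ a : ℝ, 0 < a →
      (μ {ω | a ≤ ‖X j ω‖}).toReal < 2 * Real.exp (1 - (a - 1) ^ 2 / (2 * j)) := by
  intro j hj hjL a ha
  have hexponent : -a ^ 2 / (2 * j) < 1 - (a - 1) ^ 2 / (2 * j) := by
    have hj' : (1 : ℝ) ≤ j := by exact_mod_cast hj
    rw [← sub_pos, show 1 - (a - 1) ^ 2 / (2 * j) - -a ^ 2 / (2 * j) =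
      (2 * j + 2 * a - 1) / (2 * j) by field_simp; ring]
    exact div_pos (by linarith) (by positivity)
  calc (μ {ω | a ≤ ‖X j ω‖}).toReal ≤ 2 * exp (-a ^ 2 / (2 * j)) :=
        measureReal_norm_ge_le_two_mul_exp hmeas hint hX0
          (fun k hk => by simpa using hmart (k + 1) (by omega) hk)
          (fun k hk => by simpa using hdiff (k + 1) (by omega) hk) hj hjL ha.le
    _ < 2 * exp (1 - (a - 1) ^ 2 / (2 * j)) := by gcongr
end

section
/- Let X : Ω → ℝ^d be a Bochner-integrable random vector with ‖X‖₂ ≤ σ almost surely, for some σ > 0. Then X is norm-sub-Gaussian with parameter σ: for every t ≥ 0, P( ‖X − E[X]‖₂ ≥ t ) ≤ 2·exp( −t²/(2σ²) ). -/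
/-!
Since `‖E X‖ ≤ σ`, the deviation `‖X - E X‖` is at most `2σ` almost surely, and
`E ‖X - E X‖² = E ‖X‖² - ‖E X‖² ≤ σ²`. Put `x = t² / (2σ²)`. For `x ≤ log 2` the right-hand side
is at least `1`; for `t > 2σ` the event is null; in the remaining range `log 2 < x ≤ 2` Chebyshev
gives the bound `σ² / t² = 1 / (2x)`, and `1 / (2x) ≤ 2 e^{-x}` means `e^x ≤ 4x`, which holds at
both ends of `[log 2, 2]` and hence, by convexity, on the whole interval.
-/

open MeasureTheory Real

namespace Real

lemma exp_le_four_mul {x : ℝ} (h₁ : log 2 ≤ x) (h₂ : x ≤ 2) : exp x ≤ 4 * x := by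
  have hconv : ConvexOn ℝ Set.univ (fun y => exp y - 4 * y) :=
    convexOn_exp.sub ((concaveOn_id convex_univ).smul (by norm_num : (0 : ℝ) ≤ 4))
  have hlog : 1 / 2 < log 2 := by linarith [log_two_gt_d9]
  have hexp2 : exp 2 < 8 := by
    rw [show (2 : ℝ) = 1 + 1 by norm_num, exp_add]
    nlinarith [exp_pos 1, exp_one_lt_d9]
  have hmax := hconv.le_max_of_mem_Icc (Set.mem_univ _) (Set.mem_univ _) ⟨h₁, h₂⟩
  simp only [exp_log two_pos] at hmax
  have hends : max (2 - 4 * log 2) (exp 2 - 4 * 2) ≤ 0 := max_le (by linarith) (by linarith)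
  linarith

lemma one_le_two_mul_exp_neg {x : ℝ} (h : x ≤ log 2) : 1 ≤ 2 * exp (-x) :=
  calc (1 : ℝ) = 2 * exp (-log 2) := by rw [exp_neg, exp_log two_pos]; norm_num
    _ ≤ 2 * exp (-x) := by gcongr

lemma inv_two_mul_le_two_mul_exp_neg {x : ℝ} (h₁ : log 2 ≤ x) (h₂ : x ≤ 2) :
    (2 * x)⁻¹ ≤ 2 * exp (-x) := by
  have hx : 0 < x := (log_pos one_lt_two).trans_le h₁
  calc (2 * x)⁻¹ ≤ (exp x / 2)⁻¹ :=
        inv_anti₀ (by positivity) (by linarith [exp_le_four_mul h₁ h₂])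
    _ = 2 * exp (-x) := by rw [exp_neg]; field_simp

end Real

section

variable {Ω : Type*} {mΩ : MeasurableSpace Ω} {μ : Measure Ω}

lemma integral_norm_sub_integral_sq {E : Type*} [NormedAddCommGroup E] [InnerProductSpace ℝ E]
    [CompleteSpace E] [IsProbabilityMeasure μ] {X : Ω → E} (hX : MemLp X 2 μ) :
    ∫ ω, ‖X ω - ∫ ω', X ω' ∂μ‖ ^ 2 ∂μ = ∫ ω, ‖X ω‖ ^ 2 ∂μ - ‖∫ ω, X ω ∂μ‖ ^ 2 := by
  set m := ∫ ω, X ω ∂μ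
  have hX₁ : Integrable X μ := hX.integrable one_le_two
  have hsq : Integrable (fun ω => ‖X ω‖ ^ 2) μ := hX.integrable_norm_pow two_ne_zero
  have hinner : Integrable (fun ω => 2 * inner ℝ (X ω) m) μ := (hX₁.inner_const m).const_mul 2
  simp_rw [norm_sub_sq_real]
  rw [integral_add (f := fun ω => ‖X ω‖ ^ 2 - 2 * inner ℝ (X ω) m) (hsq.sub hinner)
      (integrable_const _), integral_sub hsq hinner, integral_const_mul]
  simp_rw [real_inner_comm m]
  rw [integral_inner hX₁, real_inner_self_eq_norm_sq, integral_const, probReal_univ, one_smul]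
  ring

lemma measureReal_le_norm_le_integral_norm_sq_div {E : Type*} [NormedAddCommGroup E]
    {f : Ω → E} (hf : Integrable (fun ω => ‖f ω‖ ^ 2) μ) {t : ℝ} (ht : 0 < t) :
    μ.real {ω | t ≤ ‖f ω‖} ≤ (∫ ω, ‖f ω‖ ^ 2 ∂μ) / t ^ 2 := by
  have hset : {ω | t ≤ ‖f ω‖} = {ω | t ^ 2 ≤ ‖f ω‖ ^ 2} := by
    ext ω
    exact (pow_le_pow_iff_left₀ ht.le (norm_nonneg _) two_ne_zero).symm
  rw [hset, le_div_iff₀ (by positivity), mul_comm]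
  exact mul_meas_ge_le_integral_of_nonneg (.of_forall fun _ => by positivity) hf _

end

theorem bounded_is_normSubGaussian_general
    {Ω : Type*} {mΩ : MeasurableSpace Ω} (μ : Measure Ω) [IsProbabilityMeasure μ]
    {d : ℕ} (X : Ω → EuclideanSpace ℝ (Fin d))
    (hint : Integrable X μ)
    (σ : ℝ)
    (hbdd : ∀ᵐ ω ∂μ, ‖X ω‖ ≤ σ) :
    ∀ t : ℝ, 0 ≤ t →
      (μ {ω | t ≤ ‖X ω - ∫ ω', X ω' ∂μ‖}).toReal
        ≤ 2 * Real.exp (-t ^ 2 / (2 * σ ^ 2)) := by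
  intro t ht
  rw [← measureReal_def, neg_div]
  set x := t ^ 2 / (2 * σ ^ 2) with hx
  rcases le_or_gt x (log 2) with hsmall | hlarge
  · exact measureReal_le_one.trans (one_le_two_mul_exp_neg hsmall)
  have hlog : 0 < log 2 := log_pos one_lt_two
  have hσ : σ ≠ 0 := by rintro rfl; simp [hx] at hlarge; linarith
  have ht : t ≠ 0 := by rintro rfl; simp [hx] at hlarge; linarith
  set m := ∫ ω, X ω ∂μ
  have hm : ‖m‖ ≤ σ := by simpa using norm_integral_le_of_norm_le_const hbdd
  rcases lt_or_ge (2 * σ) t with hfar | hnear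
  · have hnull : μ {ω | t ≤ ‖X ω - m‖} = 0 := by
      rw [measure_eq_zero_iff_ae_notMem]
      filter_upwards [hbdd] with ω hω
      linarith [norm_sub_le (X ω) m]
    rw [measureReal_def, hnull, ENNReal.toReal_zero]
    positivity
  have hX : MemLp X 2 μ := MemLp.of_bound hint.aestronglyMeasurable σ hbdd
  have hmoment : ∫ ω, ‖X ω‖ ^ 2 ∂μ ≤ σ ^ 2 :=
    calc ∫ ω, ‖X ω‖ ^ 2 ∂μ ≤ ∫ _, σ ^ 2 ∂μ :=
          integral_mono_ae (hX.integrable_norm_pow two_ne_zero) (integrable_const _)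
            (by filter_upwards [hbdd] with ω hω using pow_le_pow_left₀ (norm_nonneg _) hω 2)
      _ = σ ^ 2 := by simp
  calc μ.real {ω | t ≤ ‖X ω - m‖}
      ≤ (∫ ω, ‖X ω - m‖ ^ 2 ∂μ) / t ^ 2 :=
        measureReal_le_norm_le_integral_norm_sq_div
          ((hX.sub (memLp_const m)).integrable_norm_pow two_ne_zero) (by positivity)
    _ ≤ σ ^ 2 / t ^ 2 := by
        rw [integral_norm_sub_integral_sq hX]
        gcongr
        linarith [sq_nonneg ‖m‖]
    _ = (2 * x)⁻¹ := by rw [hx]; field_simp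
    _ ≤ 2 * exp (-x) := inv_two_mul_le_two_mul_exp_neg hlarge.le (by
        rw [hx, div_le_iff₀ (by positivity)]; nlinarith)

/-- A bounded random vector is norm-sub-Gaussian: if `X : Ω → ℝ^d`
is Bochner integrable with `‖X‖₂ ≤ σ` almost surely (`σ > 0`), then for every `t ≥ 0`,
`P(‖X − E[X]‖₂ ≥ t) ≤ 2 exp(−t²/(2σ²))`, i.e. `X` is `nSG(σ)`. -/
theorem bounded_is_normSubGaussian
    {Ω : Type*} {mΩ : MeasurableSpace Ω} (μ : Measure Ω) [IsProbabilityMeasure μ]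
    {d : ℕ} (X : Ω → EuclideanSpace ℝ (Fin d))
    (hint : Integrable X μ)
    (σ : ℝ) (hσ : 0 < σ)
    (hbdd : ∀ᵐ ω ∂μ, ‖X ω‖ ≤ σ) :
    ∀ t : ℝ, 0 ≤ t →
      (μ {ω | t ≤ ‖X ω - ∫ ω', X ω' ∂μ‖}).toReal
        ≤ 2 * Real.exp (-t ^ 2 / (2 * σ ^ 2)) :=
  bounded_is_normSubGaussian_general (mΩ := mΩ) μ X hint σ hbdd
end
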